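/- There exists a constant C > 0 such that for all x, y ∈ ℝ² with |x| > 1, |y| > 1, and x ≠ y: |K(x − y*) − K(x)| ≤ C/|x − y| and |K(x − y) − K(x − y*) + K(x)| ≤ C/|x − y|. -/

import Mathlib

open MeasureTheory

noncomputable section

abbrev E2 : Type := EuclideanSpace ℝ (Fin 2)

/-- The planar Biot–Savart kernel `K(z) = z⊥ / (2π|z|²)`, where `z⊥ = (-z₂, z₁)`.
(With the junk-value convention `(0 : ℝ)⁻¹ = 0`, this gives `K 0 = 0`.) -/
def K (z : E2) : E2 :=
  (2 * Real.pi * ‖z‖ ^ 2)⁻¹ • (WithLp.equiv 2 (Fin 2 → ℝ)).symm ![-(z 1), z 0]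

/-!
Writing `y* = y/|y|²`, the kernel is `K z = (z*)⊥ / 2π`, a rotation of the inversion in the unit
circle. Inversion gives `|K z| = 1/(2π|z|)` and `|K a - K b| = |a - b| / (2π|a||b|)`, and in the
exterior of the disk the identity `|y|²|x - y*|² = |x - y|² + (|x|² - 1)(|y|² - 1)` yields
`|x - y| ≤ |y||x - y*|`. Hence `|K(x - y*) - K x| = 1/(2π|x||y||x - y*|) ≤ 1/(2π|x - y|)`, and the
triangle inequality bounds `J` by `1/(π|x - y|)`.
-/

open Real

section InnerProductSpace

variable {V : Type*} [NormedAddCommGroup V] [InnerProductSpace ℝ V]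

theorem norm_inv_norm_sq_smul (y : V) : ‖(‖y‖ ^ 2)⁻¹ • y‖ = ‖y‖⁻¹ := by
  rw [norm_smul, norm_inv, norm_pow, norm_norm]
  rcases eq_or_ne ‖y‖ 0 with hy | hy
  · simp [hy]
  · field_simp

theorem sq_norm_mul_norm_sub_inv_norm_sq_smul (x : V) {y : V} (hy : y ≠ 0) :
    (‖y‖ * ‖x - (‖y‖ ^ 2)⁻¹ • y‖) ^ 2 = ‖x - y‖ ^ 2 + (‖x‖ ^ 2 - 1) * (‖y‖ ^ 2 - 1) := by
  have hy : ‖y‖ ≠ 0 := norm_ne_zero_iff.mpr hy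
  rw [mul_pow, norm_sub_sq_real, norm_sub_sq_real, inner_smul_right, norm_inv_norm_sq_smul]
  field_simp
  ring

theorem norm_sub_le_norm_mul_norm_sub_inv_norm_sq_smul {x y : V} (hx : 1 ≤ ‖x‖) (hy : 1 ≤ ‖y‖) :
    ‖x - y‖ ≤ ‖y‖ * ‖x - (‖y‖ ^ 2)⁻¹ • y‖ := by
  have hy0 : y ≠ 0 := norm_pos_iff.mp (one_pos.trans_le hy)
  refine le_of_pow_le_pow_left₀ two_ne_zero (by positivity) ?_
  rw [sq_norm_mul_norm_sub_inv_norm_sq_smul x hy0]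
  have : 0 ≤ (‖x‖ ^ 2 - 1) * (‖y‖ ^ 2 - 1) := by
    apply mul_nonneg <;> nlinarith
  linarith

end InnerProductSpace

def perp : E2 →ₗᵢ[ℝ] E2 where
  toFun z := (WithLp.equiv 2 (Fin 2 → ℝ)).symm ![-(z 1), z 0]
  map_add' a b := by ext i; fin_cases i <;> simp [add_comm]
  map_smul' c a := by ext i; fin_cases i <;> simp
  norm_map' z := by simp [EuclideanSpace.norm_eq, Fin.sum_univ_two, add_comm]

theorem K_eq_smul_perp (z : E2) : K z = (2 * π)⁻¹ • perp ((‖z‖ ^ 2)⁻¹ • z) := by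
  rw [map_smul, smul_smul, ← mul_inv]
  rfl

theorem norm_K (z : E2) : ‖K z‖ = (2 * π * ‖z‖)⁻¹ := by
  rw [K_eq_smul_perp, norm_smul, LinearIsometry.norm_map, norm_inv_norm_sq_smul, norm_inv,
    Real.norm_of_nonneg (by positivity), ← mul_inv]

theorem norm_K_sub_K {a b : E2} (ha : a ≠ 0) (hb : b ≠ 0) :
    ‖K a - K b‖ = ‖a - b‖ / (2 * π * ‖a‖ * ‖b‖) := by
  have key := dist_div_norm_sq_smul ha hb 1
  simp only [one_div, inv_pow, one_pow, dist_eq_norm] at key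
  rw [K_eq_smul_perp, K_eq_smul_perp, ← smul_sub, ← map_sub, norm_smul,
    LinearIsometry.norm_map, key, norm_inv, Real.norm_of_nonneg (by positivity)]
  field_simp

theorem norm_K_sub_inv_norm_sq_smul_sub_K_le {x y : E2} (hx : 1 ≤ ‖x‖) (hy : 1 ≤ ‖y‖)
    (hxy : x ≠ y) : ‖K (x - (‖y‖ ^ 2)⁻¹ • y) - K x‖ ≤ (2 * π * ‖x - y‖)⁻¹ := by
  have hxy_pos : 0 < ‖x - y‖ := norm_pos_iff.mpr (sub_ne_zero.mpr hxy)
  have hdist := norm_sub_le_norm_mul_norm_sub_inv_norm_sq_smul hx hy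
  have hx0 : x ≠ 0 := norm_pos_iff.mp (one_pos.trans_le hx)
  have hxy' : x - (‖y‖ ^ 2)⁻¹ • y ≠ 0 := by
    rintro h
    rw [h, norm_zero, mul_zero] at hdist
    linarith
  rw [norm_K_sub_K hxy' hx0, sub_sub_cancel_left, norm_neg, norm_inv_norm_sq_smul]
  calc ‖y‖⁻¹ / (2 * π * ‖x - (‖y‖ ^ 2)⁻¹ • y‖ * ‖x‖)
      = (2 * π * (‖y‖ * ‖x - (‖y‖ ^ 2)⁻¹ • y‖) * ‖x‖)⁻¹ := by field_simp
    _ ≤ (2 * π * ‖x - y‖)⁻¹ := by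
      refine inv_anti₀ (by positivity) ?_
      calc 2 * π * ‖x - y‖ ≤ 2 * π * (‖y‖ * ‖x - (‖y‖ ^ 2)⁻¹ • y‖) := by gcongr
        _ ≤ _ := le_mul_of_one_le_right (by positivity) hx

/-- Decay of the correction term `L(x,y) = K(x − y*) − K(x)` and of the hydrodynamic
Biot–Savart kernel `J(x,y) = K(x − y) − K(x − y*) + K(x)` for the exterior of the unit disk:
both are bounded by `C/|x − y|`. Here `y* = y/|y|²`. -/
theorem hydrodynamic_kernel_decay_bound :
    ∃ C > 0, ∀ x y : E2, 1 < ‖x‖ → 1 < ‖y‖ → x ≠ y →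
      ‖K (x - (‖y‖ ^ 2)⁻¹ • y) - K x‖ ≤ C / ‖x - y‖ ∧
      ‖K (x - y) - K (x - (‖y‖ ^ 2)⁻¹ • y) + K x‖ ≤ C / ‖x - y‖ := by
  refine ⟨π⁻¹, by positivity, fun x y hx hy hxy => ?_⟩
  have hL := norm_K_sub_inv_norm_sq_smul_sub_K_le hx.le hy.le hxy
  have hsum : (2 * π * ‖x - y‖)⁻¹ + (2 * π * ‖x - y‖)⁻¹ = π⁻¹ / ‖x - y‖ := by
    field_simp
    ring
  refine ⟨hL.trans (hsum ▸ le_add_of_nonneg_left (by positivity)), ?_⟩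
  calc ‖K (x - y) - K (x - (‖y‖ ^ 2)⁻¹ • y) + K x‖
      = ‖K (x - y) - (K (x - (‖y‖ ^ 2)⁻¹ • y) - K x)‖ := by congr 1; abel
    _ ≤ (2 * π * ‖x - y‖)⁻¹ + (2 * π * ‖x - y‖)⁻¹ := by
      refine (norm_sub_le _ _).trans ?_
      rw [norm_K]
      gcongr
    _ = π⁻¹ / ‖x - y‖ := hsum

end
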